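/- arXiv:2204.13186 — 3 statements merged into one kernel-verified Lean document; each statement's English description precedes it below -/
import Mathlib

section
/- Let Γ be the complete bipartite graph with parts V₀, V₁ of sizes k₁ and k₀ respectively (so each vertex of V₀ has degree k₀, each vertex of V₁ has degree k₁, k₀, k₁ ≥ 1), and set n = k₀ + k₁. Let L^# be the group inverse of its combinatorial Laplacian. Then for x, x̂ ∈ V₀ distinct and y, ŷ ∈ V₁ distinct: L^#(x,x) = (n² − n − k₀)/(k₀n²), L^#(y,y) = (n² − n − k₁)/(k₁n²), L^#(x,y) = L^#(y,x) = −1/n², L^#(x̂,x) = −(n + k₀)/(k₀n²), and L^#(ŷ,y) = −(n + k₁)/(k₁n²). In particular, L^#(u,v) ≤ 0 for all distinct vertices u ≠ v, so the complete bipartite graph always has the M-property. -/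
open Finset SimpleGraph

lemma sum_ite_const' {m : ℕ} (b : Fin m) (x y : ℝ) :
    ∑ w : Fin m, (if w = b then x else y) = x + ((m:ℝ) - 1) * y := by
  have h : ∀ w : Fin m, (if w = b then x else y) = y + (if w = b then x - y else 0) := by
    intro w; split <;> ring
  simp only [h, Finset.sum_add_distrib, Finset.sum_ite_eq', Finset.mem_univ, if_true,
    Finset.sum_const, Finset.card_univ, Fintype.card_fin, nsmul_eq_mul]
  ring

lemma sum_ite_const'' {m : ℕ} (b : Fin m) (x y : ℝ) :
    ∑ w : Fin m, (if b = w then x else y) = x + ((m:ℝ) - 1) * y := by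
  rw [← sum_ite_const' b x y]
  exact Finset.sum_congr rfl fun w _ => by simp [eq_comm]

def LmatCB (k₀ k₁ : ℕ) : Matrix (Fin k₁ ⊕ Fin k₀) (Fin k₁ ⊕ Fin k₀) ℝ :=
  fun u v =>
    match u, v with
    | .inl a, .inl a' => if a = a' then (k₀ : ℝ) else 0
    | .inl _, .inr _ => -1
    | .inr _, .inl _ => -1
    | .inr b, .inr b' => if b = b' then (k₁ : ℝ) else 0

noncomputable def MmatCB (k₀ k₁ : ℕ) : Matrix (Fin k₁ ⊕ Fin k₀) (Fin k₁ ⊕ Fin k₀) ℝ :=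
  fun u v =>
    match u, v with
    | .inl a, .inl a' => if a = a' then (((k₀:ℝ)+k₁)^2 - ((k₀:ℝ)+k₁) - k₀)/(k₀*((k₀:ℝ)+k₁)^2)
        else -(((k₀:ℝ)+k₁)+k₀)/(k₀*((k₀:ℝ)+k₁)^2)
    | .inl _, .inr _ => -1/((k₀:ℝ)+k₁)^2
    | .inr _, .inl _ => -1/((k₀:ℝ)+k₁)^2
    | .inr b, .inr b' => if b = b' then (((k₀:ℝ)+k₁)^2 - ((k₀:ℝ)+k₁) - k₁)/(k₁*((k₀:ℝ)+k₁)^2)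
        else -(((k₀:ℝ)+k₁)+k₁)/(k₁*((k₀:ℝ)+k₁)^2)

noncomputable def EmatCB (k₀ k₁ : ℕ) : Matrix (Fin k₁ ⊕ Fin k₀) (Fin k₁ ⊕ Fin k₀) ℝ :=
  fun u v => (if u = v then 1 else 0) - 1/((k₀:ℝ)+k₁)

lemma degLCB (k₀ k₁ : ℕ) [inst : DecidableRel (completeBipartiteGraph (Fin k₁) (Fin k₀)).Adj]
    (a : Fin k₁) : (completeBipartiteGraph (Fin k₁) (Fin k₀)).degree (Sum.inl a) = k₀ := by
  have h : (completeBipartiteGraph (Fin k₁) (Fin k₀)).neighborFinset (Sum.inl a)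
      = univ.map Function.Embedding.inr := by
    ext w; cases w <;> simp [mem_neighborFinset]
  rw [SimpleGraph.degree, h, Finset.card_map, Finset.card_univ, Fintype.card_fin]

lemma degRCB (k₀ k₁ : ℕ) [inst : DecidableRel (completeBipartiteGraph (Fin k₁) (Fin k₀)).Adj]
    (b : Fin k₀) : (completeBipartiteGraph (Fin k₁) (Fin k₀)).degree (Sum.inr b) = k₁ := by
  have h : (completeBipartiteGraph (Fin k₁) (Fin k₀)).neighborFinset (Sum.inr b)
      = univ.map Function.Embedding.inl := by
    ext w; cases w <;> simp [mem_neighborFinset]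
  rw [SimpleGraph.degree, h, Finset.card_map, Finset.card_univ, Fintype.card_fin]

lemma lapCB_eq (k₀ k₁ : ℕ) [inst : DecidableRel (completeBipartiteGraph (Fin k₁) (Fin k₀)).Adj] :
    (completeBipartiteGraph (Fin k₁) (Fin k₀)).lapMatrix ℝ = LmatCB k₀ k₁ := by
  ext u v
  cases u <;> cases v <;>
    simp [SimpleGraph.lapMatrix, SimpleGraph.degMatrix, Matrix.diagonal, LmatCB,
      degLCB, degRCB, Sum.inl.injEq, Sum.inr.injEq]

lemma LmatCB_symm (k₀ k₁ : ℕ) (u v : Fin k₁ ⊕ Fin k₀) :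
    LmatCB k₀ k₁ u v = LmatCB k₀ k₁ v u := by
  cases u <;> cases v <;> simp [LmatCB, eq_comm]

lemma MmatCB_symm (k₀ k₁ : ℕ) (u v : Fin k₁ ⊕ Fin k₀) :
    MmatCB k₀ k₁ u v = MmatCB k₀ k₁ v u := by
  cases u <;> cases v <;> simp [MmatCB, eq_comm]

lemma EmatCB_symm (k₀ k₁ : ℕ) (u v : Fin k₁ ⊕ Fin k₀) :
    EmatCB k₀ k₁ u v = EmatCB k₀ k₁ v u := by
  simp [EmatCB, eq_comm]

lemma LmatCB_rowsum (k₀ k₁ : ℕ) (u : Fin k₁ ⊕ Fin k₀) : ∑ w, LmatCB k₀ k₁ u w = 0 := by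
  cases u <;>
    simp [LmatCB, Fintype.sum_sum_type, Finset.sum_ite_eq, Finset.sum_const,
      Finset.card_univ]

lemma MmatCB_rowsum (k₀ k₁ : ℕ) (hk₀ : 1 ≤ k₀) (hk₁ : 1 ≤ k₁) (u : Fin k₁ ⊕ Fin k₀) :
    ∑ w, MmatCB k₀ k₁ u w = 0 := by
  have hn : ((k₀:ℝ)+k₁) ≠ 0 := by positivity
  have h0 : (k₀:ℝ) ≠ 0 := by positivity
  have h1 : (k₁:ℝ) ≠ 0 := by positivity
  cases u <;>
    · simp only [MmatCB, Fintype.sum_sum_type, sum_ite_const'', Finset.sum_const,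
        Finset.card_univ, Fintype.card_fin, nsmul_eq_mul]
      field_simp
      ring

lemma LMCB_eq_E (k₀ k₁ : ℕ) (hk₀ : 1 ≤ k₀) (hk₁ : 1 ≤ k₁) :
    LmatCB k₀ k₁ * MmatCB k₀ k₁ = EmatCB k₀ k₁ := by
  have hn : ((k₀:ℝ)+k₁) ≠ 0 := by positivity
  have h0 : (k₀:ℝ) ≠ 0 := by positivity
  have h1 : (k₁:ℝ) ≠ 0 := by positivity
  ext u v
  cases u with
  | inl a => cases v with
    | inl a' =>
      simp only [Matrix.mul_apply, Fintype.sum_sum_type, LmatCB, MmatCB, EmatCB,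
        ite_mul, zero_mul, neg_one_mul, Finset.sum_neg_distrib,
        Finset.sum_ite_eq, Finset.mem_univ, if_true, sum_ite_const', sum_ite_const'',
        Finset.sum_const, Finset.card_univ, Fintype.card_fin, nsmul_eq_mul, Sum.inl.injEq]
      rcases eq_or_ne a a' with rfl | h
      · simp only [if_true]; field_simp; ring
      · simp only [h, if_false]; field_simp; ring
    | inr b =>
      simp only [Matrix.mul_apply, Fintype.sum_sum_type, LmatCB, MmatCB, EmatCB,
        ite_mul, zero_mul, neg_one_mul, Finset.sum_neg_distrib, neg_neg,
        Finset.sum_ite_eq, Finset.mem_univ, if_true, sum_ite_const', sum_ite_const'',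
        Finset.sum_const, Finset.card_univ, Fintype.card_fin, nsmul_eq_mul, reduceCtorEq,
        if_false]
      field_simp; ring
  | inr b => cases v with
    | inl a =>
      simp only [Matrix.mul_apply, Fintype.sum_sum_type, LmatCB, MmatCB, EmatCB,
        ite_mul, zero_mul, neg_one_mul, Finset.sum_neg_distrib, neg_neg,
        Finset.sum_ite_eq, Finset.mem_univ, if_true, sum_ite_const', sum_ite_const'',
        Finset.sum_const, Finset.card_univ, Fintype.card_fin, nsmul_eq_mul, reduceCtorEq,
        if_false]
      field_simp; ring
    | inr b' =>
      simp only [Matrix.mul_apply, Fintype.sum_sum_type, LmatCB, MmatCB, EmatCB,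
        ite_mul, zero_mul, neg_one_mul, Finset.sum_neg_distrib,
        Finset.sum_ite_eq, Finset.mem_univ, if_true, sum_ite_const', sum_ite_const'',
        Finset.sum_const, Finset.card_univ, Fintype.card_fin, nsmul_eq_mul, Sum.inr.injEq]
      rcases eq_or_ne b b' with rfl | h
      · simp only [if_true]; field_simp; ring
      · simp only [h, if_false]; field_simp; ring

lemma E_mul_CB (k₀ k₁ : ℕ) (A : Matrix (Fin k₁ ⊕ Fin k₀) (Fin k₁ ⊕ Fin k₀) ℝ)
    (hs : ∀ u v, A u v = A v u) (hr : ∀ u, ∑ w, A u w = 0) :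
    EmatCB k₀ k₁ * A = A := by
  ext u v
  rw [Matrix.mul_apply]
  have hc : ∑ w, A w v = 0 := by
    rw [Finset.sum_congr rfl fun w _ => hs w v]; exact hr v
  calc ∑ w, EmatCB k₀ k₁ u w * A w v
      = ∑ w, ((if u = w then 1 else 0) * A w v - (1/((k₀:ℝ)+k₁)) * A w v) := by
        apply Finset.sum_congr rfl; intro w _; simp only [EmatCB]; ring
    _ = A u v := by
        simp [Finset.sum_sub_distrib, ite_mul, Finset.sum_ite_eq, ← Finset.mul_sum, hc]

lemma groupInv_uniqueCB {n : Type*} [Fintype n] [DecidableEq n] (L X Y : Matrix n n ℝ)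
    (h1 : L*X*L = L) (h2 : X*L*X = X) (h3 : L*X = X*L)
    (h1' : L*Y*L = L) (h2' : Y*L*Y = Y) (h3' : L*Y = Y*L) : X = Y := by
  have key : Y*L = L*X := by
    calc Y*L = Y*(L*X*L) := by rw [h1]
    _ = (Y*L)*(X*L) := by simp only [Matrix.mul_assoc]
    _ = (L*Y)*(X*L) := by rw [h3']
    _ = (L*Y)*(L*X) := by rw [h3]
    _ = (L*Y*L)*X := by simp only [Matrix.mul_assoc]
    _ = L*X := by rw [h1']
  have key2 : X*L = L*Y := by rw [← h3, ← key, h3']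
  calc X = X*L*X := h2.symm
    _ = (L*Y)*X := by rw [key2]
    _ = (Y*L)*X := by rw [h3']
    _ = Y*(L*X) := by simp only [Matrix.mul_assoc]
    _ = Y*(L*Y) := by rw [← key, ← h3']
    _ = Y*L*Y := by simp only [Matrix.mul_assoc]
    _ = Y := h2'

theorem stmt14 (k₀ k₁ : ℕ) (hk₀ : 1 ≤ k₀) (hk₁ : 1 ≤ k₁)
    [inst : DecidableRel (completeBipartiteGraph (Fin k₁) (Fin k₀)).Adj]
    (Lsharp : Matrix (Fin k₁ ⊕ Fin k₀) (Fin k₁ ⊕ Fin k₀) ℝ)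
    (hLs1 : (completeBipartiteGraph (Fin k₁) (Fin k₀)).lapMatrix ℝ * Lsharp *
        (completeBipartiteGraph (Fin k₁) (Fin k₀)).lapMatrix ℝ =
      (completeBipartiteGraph (Fin k₁) (Fin k₀)).lapMatrix ℝ)
    (hLs2 : Lsharp * (completeBipartiteGraph (Fin k₁) (Fin k₀)).lapMatrix ℝ * Lsharp = Lsharp)
    (hLs3 : (completeBipartiteGraph (Fin k₁) (Fin k₀)).lapMatrix ℝ * Lsharp =
      Lsharp * (completeBipartiteGraph (Fin k₁) (Fin k₀)).lapMatrix ℝ) :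
    (∀ a : Fin k₁, Lsharp (Sum.inl a) (Sum.inl a) =
      (((k₀ : ℝ) + k₁) ^ 2 - ((k₀ : ℝ) + k₁) - k₀) / (k₀ * ((k₀ : ℝ) + k₁) ^ 2)) ∧
    (∀ b : Fin k₀, Lsharp (Sum.inr b) (Sum.inr b) =
      (((k₀ : ℝ) + k₁) ^ 2 - ((k₀ : ℝ) + k₁) - k₁) / (k₁ * ((k₀ : ℝ) + k₁) ^ 2)) ∧
    (∀ (a : Fin k₁) (b : Fin k₀),
      Lsharp (Sum.inl a) (Sum.inr b) = -1 / ((k₀ : ℝ) + k₁) ^ 2 ∧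
      Lsharp (Sum.inr b) (Sum.inl a) = -1 / ((k₀ : ℝ) + k₁) ^ 2) ∧
    (∀ a a' : Fin k₁, a ≠ a' → Lsharp (Sum.inl a') (Sum.inl a) =
      -(((k₀ : ℝ) + k₁) + k₀) / (k₀ * ((k₀ : ℝ) + k₁) ^ 2)) ∧
    (∀ b b' : Fin k₀, b ≠ b' → Lsharp (Sum.inr b') (Sum.inr b) =
      -(((k₀ : ℝ) + k₁) + k₁) / (k₁ * ((k₀ : ℝ) + k₁) ^ 2)) ∧
    (∀ u v : Fin k₁ ⊕ Fin k₀, u ≠ v → Lsharp u v ≤ 0) := by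
  rw [lapCB_eq k₀ k₁] at hLs1 hLs2 hLs3
  have hE : LmatCB k₀ k₁ * MmatCB k₀ k₁ = EmatCB k₀ k₁ := LMCB_eq_E k₀ k₁ hk₀ hk₁
  have hML : MmatCB k₀ k₁ * LmatCB k₀ k₁ = EmatCB k₀ k₁ := by
    ext u v
    rw [Matrix.mul_apply]
    calc ∑ w, MmatCB k₀ k₁ u w * LmatCB k₀ k₁ w v
        = ∑ w, LmatCB k₀ k₁ v w * MmatCB k₀ k₁ w u := by
          refine Finset.sum_congr rfl fun w _ => ?_
          rw [MmatCB_symm, LmatCB_symm, mul_comm]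
      _ = (LmatCB k₀ k₁ * MmatCB k₀ k₁) v u := (Matrix.mul_apply).symm
      _ = EmatCB k₀ k₁ v u := by rw [hE]
      _ = EmatCB k₀ k₁ u v := EmatCB_symm k₀ k₁ v u
  have hM1 : LmatCB k₀ k₁ * MmatCB k₀ k₁ * LmatCB k₀ k₁ = LmatCB k₀ k₁ := by
    rw [hE]; exact E_mul_CB k₀ k₁ _ (LmatCB_symm k₀ k₁) (LmatCB_rowsum k₀ k₁)
  have hM2 : MmatCB k₀ k₁ * LmatCB k₀ k₁ * MmatCB k₀ k₁ = MmatCB k₀ k₁ := by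
    rw [hML]; exact E_mul_CB k₀ k₁ _ (MmatCB_symm k₀ k₁) (MmatCB_rowsum k₀ k₁ hk₀ hk₁)
  have hM3 : LmatCB k₀ k₁ * MmatCB k₀ k₁ = MmatCB k₀ k₁ * LmatCB k₀ k₁ := hE.trans hML.symm
  have hXeq : Lsharp = MmatCB k₀ k₁ :=
    groupInv_uniqueCB (LmatCB k₀ k₁) Lsharp (MmatCB k₀ k₁) hLs1 hLs2 hLs3 hM1 hM2 hM3
  subst hXeq
  refine ⟨fun a => by simp [MmatCB], fun b => by simp [MmatCB],
    fun a b => ⟨rfl, rfl⟩,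
    fun a a' h => by simp [MmatCB, Ne.symm h],
    fun b b' h => by simp [MmatCB, Ne.symm h],
    fun u v huv => ?_⟩
  cases u with
  | inl a => cases v with
    | inl a' =>
      have h : a ≠ a' := fun hh => huv (by rw [hh])
      have hp : (0:ℝ) ≤ (((k₀:ℝ)+k₁)+k₀) / (k₀*((k₀:ℝ)+k₁)^2) := by positivity
      simp only [MmatCB, h, if_false]
      rw [neg_div]; linarith
    | inr b =>
      have hp : (0:ℝ) ≤ (1:ℝ) / ((k₀:ℝ)+k₁)^2 := by positivity
      simp only [MmatCB]
      rw [neg_div]; linarith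
  | inr b => cases v with
    | inl a =>
      have hp : (0:ℝ) ≤ (1:ℝ) / ((k₀:ℝ)+k₁)^2 := by positivity
      simp only [MmatCB]
      rw [neg_div]; linarith
    | inr b' =>
      have h : b ≠ b' := fun hh => huv (by rw [hh])
      have hp : (0:ℝ) ≤ (((k₀:ℝ)+k₁)+k₁) / (k₁*((k₀:ℝ)+k₁)^2) := by positivity
      simp only [MmatCB, h, if_false]
      rw [neg_div]; linarith
end

section
/- Let Γ be a distance-biregular graph. Then Γ has the M-property if and only if Σ_{j=1}^{D₀−1} (1/(k_{0,j}·b_{0,j}))·(Σ_{i=j+1}^{D₀} k_{0,i})² ≤ (n−1)/k₀. -/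
/-!
In a distance-biregular graph the group inverse of the Laplacian depends only on the colour of
the row vertex and on the distance: `L^#(x, y) = g_ℓ(d(x, y))` for `ℓ` the colour of `x`, where
`g_ℓ(i) = (1/n) ∑_{j < D_ℓ} S_j² / (n k_j b_j) - ∑_{j < i} S_j / (n k_j b_j)` and
`S_j = k_{j+1} + ⋯ + k_{D_ℓ}`. Indeed, summing over the neighbours of `y` sorted by their
distance to `x`, and using `k_j b_j = k_{j+1} c_{j+1}`, the matrix `M` with these entries satisfies
`M L = I - J/n` and `M J = 0` (`J` the all-ones matrix), which characterise the group inverse of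
the symmetric matrix `L`. Each `g_ℓ` is decreasing, so the
largest off-diagonal entry of a row sits at distance `1`, and symmetry of `L^#` across an edge
shows that both colour classes give the same value there. The `M`-property therefore amounts to
`g_0(1) ≤ 0`, which rearranges to the stated inequality.
-/

open Finset SimpleGraph Matrix

def IsGroupInverse {M : Type*} [Mul M] (a x : M) : Prop :=
  a * x * a = a ∧ x * a * x = x ∧ a * x = x * a

lemma IsGroupInverse.eq {M : Type*} [Semigroup M] {a x y : M} (hx : IsGroupInverse a x)
    (hy : IsGroupInverse a y) : x = y := by
  obtain ⟨hx₁, hx₂, hx₃⟩ := hx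
  obtain ⟨hy₁, hy₂, hy₃⟩ := hy
  have hxx : x = x * x * a := by rw [mul_assoc, ← hx₃, ← mul_assoc, hx₂]
  have hyy : y = a * y * y := by rw [hy₃, hy₂]
  calc x = x * x * a := hxx
    _ = x * x * (a * y * a) := by rw [hy₁]
    _ = (x * x * a) * (y * a) := by simp only [mul_assoc]
    _ = x * (a * y) := by rw [← hxx, hy₃]
    _ = a * x * y := by rw [← mul_assoc, hx₃]
    _ = a * x * (a * y * y) := by rw [← hyy]
    _ = (a * x * a) * y * y := by simp only [mul_assoc]
    _ = y := by rw [hx₁, ← hyy]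

namespace Matrix

variable {ι R : Type*} [Fintype ι] [DecidableEq ι] [CommRing R] {L M J : Matrix ι ι R}

lemma transpose_eq_of_mul_eq_one_sub (hL : Lᵀ = L) (hJ : Jᵀ = J) (hML : M * L = 1 - J)
    (hMJ : M * J = 0) : Mᵀ = M := by
  have hLM : L * Mᵀ = 1 - J := by
    rw [← hL, ← transpose_mul, hML, transpose_sub, transpose_one, hJ]
  have hJM : J * Mᵀ = 0 := by rw [← hJ, ← transpose_mul, hMJ, transpose_zero]
  calc Mᵀ = (1 - J) * Mᵀ := by rw [sub_mul, hJM, one_mul, sub_zero]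
    _ = M * (L * Mᵀ) := by rw [← hML, mul_assoc]
    _ = M := by rw [hLM, mul_sub, hMJ, mul_one, sub_zero]

lemma isGroupInverse_of_mul_eq_one_sub (hL : Lᵀ = L) (hJ : Jᵀ = J) (hJL : J * L = 0)
    (hML : M * L = 1 - J) (hMJ : M * J = 0) : IsGroupInverse L M := by
  have hM := transpose_eq_of_mul_eq_one_sub hL hJ hML hMJ
  have hLM : L * M = M * L := by
    have := congrArg transpose hML
    rwa [transpose_mul, hM, hL, transpose_sub, transpose_one, hJ, ← hML] at this
  have hJM : J * M = 0 := by rw [← hM, ← hJ, ← transpose_mul, hMJ, transpose_zero]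
  refine ⟨?_, ?_, hLM⟩
  · rw [hLM, hML, sub_mul, one_mul, hJL, sub_zero]
  · rw [hML, sub_mul, one_mul, hJM, sub_zero]

end Matrix

namespace SimpleGraph

section Metric

variable {V : Type*} {G : SimpleGraph V} {σ : V → Fin 2}

lemma Walk.color_eq_iff_even_length (hbip : ∀ x y, G.Adj x y → σ x ≠ σ y) {u v : V}
    (p : G.Walk u v) : σ u = σ v ↔ Even p.length := by
  induction p with
  | nil => simp
  | cons h p ih =>
    have := hbip _ _ h
    rw [Walk.length_cons, Nat.even_add_one, ← ih]
    omega

lemma Connected.dist_adj_eq_succ_or_succ_eq (hconn : G.Connected)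
    (hbip : ∀ x y, G.Adj x y → σ x ≠ σ y) {y z : V} (h : G.Adj y z) (x : V) :
    G.dist x z = G.dist x y + 1 ∨ G.dist x z + 1 = G.dist x y := by
  have hne : G.dist x z ≠ G.dist x y := by
    intro heq
    obtain ⟨p, hp⟩ := hconn.exists_walk_length_eq_dist x y
    obtain ⟨q, hq⟩ := hconn.exists_walk_length_eq_dist x z
    have hpq := (Walk.color_eq_iff_even_length hbip (p.concat h)).symm.trans
      (Walk.color_eq_iff_even_length hbip q)
    rw [Walk.length_concat, hp, hq, heq, Nat.even_add_one] at hpq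
    exact iff_not_self hpq.symm
  have := h.diff_dist_adj (u := x)
  omega

lemma Connected.exists_adj_dist_eq (hconn : G.Connected) {x z : V} {m : ℕ}
    (h : G.dist x z = m + 1) : ∃ w, G.Adj z w ∧ G.dist x w = m := by
  obtain ⟨p, hp⟩ := hconn.exists_walk_length_eq_dist z x
  rw [dist_comm] at hp
  cases p with
  | nil => simp_all
  | @cons _ w _ hzw q =>
    refine ⟨w, hzw, le_antisymm ?_ ?_⟩
    · have := G.dist_le q.reverse
      simp_all
    · have := hconn.dist_triangle (u := x) (v := w) (w := z)
      rw [dist_eq_one_iff_adj.2 hzw.symm] at this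
      omega

lemma Connected.exists_dist_eq_of_le (hconn : G.Connected) {x y : V} {d : ℕ}
    (h : d ≤ G.dist x y) : ∃ z, G.dist x z = d := by
  induction hm : G.dist x y generalizing y with
  | zero => exact ⟨y, by omega⟩
  | succ m ih =>
    rcases h.lt_or_eq with h | h
    · obtain ⟨w, -, hw⟩ := hconn.exists_adj_dist_eq hm
      exact ih (by omega) hw
    · exact ⟨y, by omega⟩

end Metric

section Laplacian

variable {V R : Type*} [Fintype V] [DecidableEq V] [CommRing R] (G : SimpleGraph V)
  [DecidableRel G.Adj]

lemma mul_lapMatrix_apply (M : Matrix V V R) (x y : V) :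
    (M * G.lapMatrix R) x y = G.degree y * M x y - ∑ z ∈ G.neighborFinset y, M x z := by
  rw [← lapMatrix_mulVec_apply, Matrix.mul_apply, Matrix.mulVec, dotProduct]
  exact sum_congr rfl fun z _ => by rw [mul_comm, (G.isSymm_lapMatrix (R := R)).apply]

lemma const_mul_lapMatrix (a : R) : Matrix.of (fun _ _ : V => a) * G.lapMatrix R = 0 := by
  ext x y
  simp only [mul_lapMatrix_apply, of_apply, sum_const, card_neighborFinset_eq_degree, nsmul_eq_mul]
  simp

end Laplacian

end SimpleGraph

noncomputable def tailSum (k : ℕ → ℕ) (D j : ℕ) : ℝ :=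
  ∑ i ∈ Icc (j + 1) D, (k i : ℝ)

noncomputable def greenStep (n : ℕ) (k b : ℕ → ℕ) (D j : ℕ) : ℝ :=
  tailSum k D j / (n * k j * b j)

noncomputable def greenProfile (n : ℕ) (k b : ℕ → ℕ) (D i : ℕ) : ℝ :=
  (∑ j ∈ range D, greenStep n k b D j * tailSum k D j) / n
    - ∑ j ∈ range i, greenStep n k b D j

/-- The numerical data of one colour class of a distance-biregular graph on `n` vertices:
`k i` vertices at distance `i` from a vertex of eccentricity `D`, intersection numbers `b i`,
`c i`. -/
structure IsIntersectionArray (n D : ℕ) (k b c : ℕ → ℕ) : Prop where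
  k_zero : k 0 = 1
  k_pos : ∀ i ≤ D, 0 < k i
  sum_k : ∑ i ∈ range (D + 1), k i = n
  b_pos : ∀ i < D, 0 < b i
  b_last : b D = 0
  c_zero : c 0 = 0
  k_mul_b : ∀ i, k i * b i = k (i + 1) * c (i + 1)

section GreenProfile

variable {n : ℕ} {k b c : ℕ → ℕ} {D : ℕ}

lemma tailSum_of_le {j : ℕ} (h : D ≤ j) : tailSum k D j = 0 := by
  rw [tailSum, Icc_eq_empty (by omega), sum_empty]

lemma tailSum_eq_add {j : ℕ} (h : j < D) : tailSum k D j = k (j + 1) + tailSum k D (j + 1) := by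
  rw [tailSum, tailSum, ← insert_Icc_add_one_left_eq_Icc (by omega : j + 1 ≤ D),
    sum_insert (by simp)]

lemma tailSum_nonneg (j : ℕ) : 0 ≤ tailSum k D j := by
  unfold tailSum; positivity

lemma greenStep_nonneg (j : ℕ) : 0 ≤ greenStep n k b D j := by
  unfold greenStep; have := tailSum_nonneg (k := k) (D := D) j; positivity

lemma greenProfile_sub_succ (i : ℕ) :
    greenProfile n k b D i - greenProfile n k b D (i + 1) = greenStep n k b D i := by
  simp only [greenProfile, sum_range_succ]; ring

lemma greenProfile_antitone : Antitone (greenProfile n k b D) :=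
  antitone_nat_of_succ_le fun i => by
    linarith [greenProfile_sub_succ (n := n) (k := k) (b := b) (D := D) i,
      greenStep_nonneg (n := n) (k := k) (b := b) (D := D) i]

namespace IsIntersectionArray

lemma n_pos (hA : IsIntersectionArray n D k b c) : 0 < n := by
  rw [← hA.sum_k, sum_range_succ', hA.k_zero]; omega

lemma tailSum_zero (hA : IsIntersectionArray n D k b c) : tailSum k D 0 = n - 1 := by
  have h : range (D + 1) = insert 0 (Icc 1 D) := by ext; simp; omega
  rw [← hA.sum_k, h, sum_insert (by simp), hA.k_zero, tailSum]
  push_cast; ring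

lemma sum_mul_greenProfile (hA : IsIntersectionArray n D k b c) :
    ∑ i ∈ range (D + 1), (k i : ℝ) * greenProfile n k b D i = 0 := by
  have hswap : ∑ i ∈ range (D + 1), (k i : ℝ) * ∑ j ∈ range i, greenStep n k b D j
      = ∑ j ∈ range D, greenStep n k b D j * tailSum k D j := by
    simp only [mul_sum, tailSum]
    rw [sum_comm' (t' := range D) (s' := fun j => Icc (j + 1) D) (fun i j => by simp; omega)]
    exact sum_congr rfl fun j _ => sum_congr rfl fun i _ => mul_comm _ _
  have hn : (n : ℝ) ≠ 0 := by exact_mod_cast hA.n_pos.ne'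
  have hsum : ∑ i ∈ range (D + 1), (k i : ℝ) = n := by exact_mod_cast hA.sum_k
  simp only [greenProfile, mul_sub, sum_sub_distrib, hswap, ← sum_mul, hsum]
  field_simp
  ring

lemma b_mul_greenStep (hA : IsIntersectionArray n D k b c) {i : ℕ} (hi : i ≤ D) :
    b i * greenStep n k b D i = tailSum k D i / (n * k i) := by
  rcases hi.lt_or_eq with hi | rfl
  · have := hA.b_pos i hi
    rw [greenStep]
    field_simp
  · rw [hA.b_last, tailSum_of_le le_rfl]
    simp

lemma c_mul_greenStep (hA : IsIntersectionArray n D k b c) {i : ℕ} (hi : i < D) :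
    c (i + 1) * greenStep n k b D i = tailSum k D i / (n * k (i + 1)) := by
  have hkb : (k i * b i : ℝ) = k (i + 1) * c (i + 1) := by exact_mod_cast hA.k_mul_b i
  have hc : (c (i + 1) : ℝ) ≠ 0 := by
    have := Nat.mul_pos (hA.k_pos i hi.le) (hA.b_pos i hi)
    rw [hA.k_mul_b] at this
    exact_mod_cast (Nat.pos_of_mul_pos_left this).ne'
  rw [greenStep, mul_assoc, hkb]
  field_simp

lemma greenProfile_recurrence (hA : IsIntersectionArray n D k b c) {i : ℕ} (hi : i ≤ D) :
    (c i + b i) * greenProfile n k b D i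
        - (c i * greenProfile n k b D (i - 1) + b i * greenProfile n k b D (i + 1))
      = (if i = 0 then 1 else 0) - (n : ℝ)⁻¹ := by
  have hn : (n : ℝ) ≠ 0 := by exact_mod_cast hA.n_pos.ne'
  have hsplit : (c i + b i) * greenProfile n k b D i
        - (c i * greenProfile n k b D (i - 1) + b i * greenProfile n k b D (i + 1))
      = b i * greenStep n k b D i
        - c i * (greenProfile n k b D (i - 1) - greenProfile n k b D i) := by
    rw [← greenProfile_sub_succ]; ring
  rw [hsplit, hA.b_mul_greenStep hi]
  -- at `i = 0` the truncated `i - 1` is harmless because `c 0 = 0`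
  rcases i with _ | i
  · rw [hA.c_zero, tailSum_zero hA, hA.k_zero, if_pos rfl]
    field_simp
    ring
  · have hk : (k (i + 1) : ℝ) ≠ 0 := by exact_mod_cast (hA.k_pos (i + 1) hi).ne'
    rw [Nat.add_sub_cancel, greenProfile_sub_succ, hA.c_mul_greenStep (by omega),
      tailSum_eq_add (j := i) (by omega), if_neg (by omega)]
    field_simp
    ring

lemma greenProfile_one (hA : IsIntersectionArray n D k b c) (hD : 1 ≤ D) :
    greenProfile n k b D 1 =
      ((∑ j ∈ Icc 1 (D - 1), 1 / ((k j : ℝ) * b j) * tailSum k D j ^ 2) - (n - 1) / b 0)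
        / n ^ 2 := by
  have hn : (n : ℝ) ≠ 0 := by exact_mod_cast hA.n_pos.ne'
  have hb : (b 0 : ℝ) ≠ 0 := by exact_mod_cast (hA.b_pos 0 hD).ne'
  have hrange : range D = insert 0 (Icc 1 (D - 1)) := by ext; simp; omega
  have hterm (j : ℕ) : greenStep n k b D j * tailSum k D j
      = 1 / n * (1 / ((k j : ℝ) * b j) * tailSum k D j ^ 2) := by
    rw [greenStep]; ring
  rw [greenProfile, hrange, sum_insert (by simp), sum_range_one]
  simp only [hterm, ← mul_sum]
  rw [greenStep, tailSum_zero hA, hA.k_zero]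
  field_simp
  ring

end IsIntersectionArray

end GreenProfile

structure HasIntersectionNumbers {V : Type*} [Fintype V] (G : SimpleGraph V) [DecidableRel G.Adj]
    (σ : V → Fin 2) (c b : Fin 2 → ℕ → ℕ) : Prop where
  card_pred : ∀ (x y : V) (i : ℕ), G.dist x y = i →
    #{z | G.dist x z = i - 1 ∧ G.Adj y z} = c (σ x) i
  card_succ : ∀ (x y : V) (i : ℕ), G.dist x y = i →
    #{z | G.dist x z = i + 1 ∧ G.Adj y z} = b (σ x) i

lemma exists_dist_eq_of_le_ecc {V : Type*} [Fintype V] {G : SimpleGraph V} {σ : V → Fin 2}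
    {kk : Fin 2 → ℕ → ℕ} {D : Fin 2 → ℕ} (hconn : G.Connected)
    (hDmax : ∀ ℓ : Fin 2, ∃ x y : V, σ x = ℓ ∧ G.dist x y = D ℓ)
    (hkk : ∀ (x : V) (i : ℕ), #{y | G.dist x y = i} = kk (σ x) i)
    {x : V} {i : ℕ} (hi : i ≤ D (σ x)) : ∃ z, G.dist x z = i := by
  obtain ⟨x', y', hx', hy'⟩ := hDmax (σ x)
  obtain ⟨z', hz'⟩ := hconn.exists_dist_eq_of_le (hy' ▸ hi)
  -- the number of vertices at distance `i` only depends on the colour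
  have hpos : 0 < #{z | G.dist x z = i} := by
    rw [hkk, ← hx', ← hkk x']
    exact card_pos.2 ⟨z', by simp [hz']⟩
  obtain ⟨z, hz⟩ := card_pos.1 hpos
  exact ⟨z, (mem_filter.1 hz).2⟩

namespace HasIntersectionNumbers

variable {V : Type*} [Fintype V] {G : SimpleGraph V} [DecidableRel G.Adj]
  {σ : V → Fin 2} {c b kk : Fin 2 → ℕ → ℕ} {D : Fin 2 → ℕ}

lemma sum_neighborFinset_comp_dist (hG : HasIntersectionNumbers G σ c b) (hconn : G.Connected)
    (hbip : ∀ x y : V, G.Adj x y → σ x ≠ σ y) (f : ℕ → ℝ) (x y : V) :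
    ∑ z ∈ G.neighborFinset y, f (G.dist x z) =
      c (σ x) (G.dist x y) * f (G.dist x y - 1) + b (σ x) (G.dist x y) * f (G.dist x y + 1) := by
  set d := G.dist x y
  have hlayer (e : ℕ) : ∑ z ∈ G.neighborFinset y with G.dist x z = e, f (G.dist x z)
      = #{z | G.dist x z = e ∧ G.Adj y z} * f e := by
    rw [sum_congr rfl fun z hz => by rw [(mem_filter.1 hz).2], sum_const, nsmul_eq_mul]
    congr 3
    ext z
    simp [and_comm]
  have hup : {z ∈ G.neighborFinset y | ¬G.dist x z = d - 1}
      = {z ∈ G.neighborFinset y | G.dist x z = d + 1} := by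
    refine filter_congr fun z hz => ?_
    have := hconn.dist_adj_eq_succ_or_succ_eq hbip ((mem_neighborFinset _ _ _).1 hz) x
    omega
  rw [← sum_filter_add_sum_filter_not _ (fun z => G.dist x z = d - 1), hup, hlayer, hlayer,
    hG.card_pred x y d rfl, hG.card_succ x y d rfl]

lemma degree_eq (hG : HasIntersectionNumbers G σ c b) (hconn : G.Connected)
    (hbip : ∀ x y : V, G.Adj x y → σ x ≠ σ y) (x y : V) :
    G.degree y = c (σ x) (G.dist x y) + b (σ x) (G.dist x y) := by
  have := hG.sum_neighborFinset_comp_dist hconn hbip (fun _ => 1) x y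
  simp only [sum_const, card_neighborFinset_eq_degree, nsmul_eq_mul, mul_one] at this
  exact_mod_cast this

lemma card_mul_b_eq (hG : HasIntersectionNumbers G σ c b) (x : V) (i : ℕ) :
    #{y | G.dist x y = i} * b (σ x) i = #{y | G.dist x y = i + 1} * c (σ x) (i + 1) := by
  refine card_mul_eq_card_mul G.Adj (fun y hy => ?_) (fun z hz => ?_)
  · rw [← hG.card_succ x y i (mem_filter.1 hy).2, bipartiteAbove, filter_filter]
  · rw [← hG.card_pred x z (i + 1) (mem_filter.1 hz).2, bipartiteBelow, filter_filter,
      Nat.add_sub_cancel]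
    simp only [G.adj_comm]

lemma isIntersectionArray (hG : HasIntersectionNumbers G σ c b) (hconn : G.Connected)
    (hDub : ∀ x y : V, G.dist x y ≤ D (σ x))
    (hDmax : ∀ ℓ : Fin 2, ∃ x y : V, σ x = ℓ ∧ G.dist x y = D ℓ)
    (hkk : ∀ (x : V) (i : ℕ), #{y | G.dist x y = i} = kk (σ x) i) (x : V) :
    IsIntersectionArray (Fintype.card V) (D (σ x)) (kk (σ x)) (b (σ x)) (c (σ x)) := by
  have hex {i : ℕ} (hi : i ≤ D (σ x)) : ∃ z, G.dist x z = i :=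
    exists_dist_eq_of_le_ecc hconn hDmax hkk hi
  refine ⟨?_, fun i hi => ?_, ?_, fun i hi => ?_, ?_, ?_, fun i => ?_⟩
  · rw [← hkk x 0, card_eq_one]
    exact ⟨x, by ext y; simp [hconn.dist_eq_zero_iff, eq_comm]⟩
  · obtain ⟨z, hz⟩ := hex hi
    rw [← hkk x i]
    exact card_pos.2 ⟨z, by simp [hz]⟩
  · rw [← card_univ, card_eq_sum_card_fiberwise (f := G.dist x) (t := range (D (σ x) + 1))
      fun y _ => mem_range.2 (Nat.lt_succ_of_le (hDub x y))]
    exact sum_congr rfl fun i _ => (hkk x i).symm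
  · obtain ⟨z, hz⟩ := hex (i := i + 1) hi
    obtain ⟨w, hzw, hw⟩ := hconn.exists_adj_dist_eq hz
    rw [← hG.card_succ x w i hw]
    exact card_pos.2 ⟨z, by simp [hz, hzw.symm]⟩
  · obtain ⟨y, hy⟩ := hex le_rfl
    rw [← hG.card_succ x y _ hy, card_eq_zero, filter_eq_empty_iff]
    intro z _ hz
    have := hDub x z
    omega
  · rw [← hG.card_pred x x 0 dist_self, card_eq_zero, filter_eq_empty_iff]
    rintro z - ⟨hz, hadj⟩
    rw [Nat.zero_sub, hconn.dist_eq_zero_iff] at hz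
    subst hz
    exact G.irrefl hadj
  · rw [← hkk x i, ← hkk x (i + 1)]
    exact hG.card_mul_b_eq x i

end HasIntersectionNumbers

noncomputable def greenMatrix {V : Type*} [Fintype V] (G : SimpleGraph V) (σ : V → Fin 2)
    (kk b : Fin 2 → ℕ → ℕ) (D : Fin 2 → ℕ) : Matrix V V ℝ :=
  of fun x y => greenProfile (Fintype.card V) (kk (σ x)) (b (σ x)) (D (σ x)) (G.dist x y)

section GreenMatrix

variable {V : Type*} [Fintype V] {G : SimpleGraph V}
  {σ : V → Fin 2} {c b kk : Fin 2 → ℕ → ℕ} {D : Fin 2 → ℕ}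

lemma greenMatrix_mul_const (hDub : ∀ x y : V, G.dist x y ≤ D (σ x))
    (hkk : ∀ (x : V) (i : ℕ), #{y | G.dist x y = i} = kk (σ x) i)
    (hA : ∀ x : V,
      IsIntersectionArray (Fintype.card V) (D (σ x)) (kk (σ x)) (b (σ x)) (c (σ x)))
    (a : ℝ) : greenMatrix G σ kk b D * of (fun _ _ => a) = 0 := by
  ext x y
  simp only [greenMatrix, mul_apply, of_apply, Matrix.zero_apply, ← sum_mul]
  rw [← sum_fiberwise_of_maps_to (g := G.dist x) (t := range (D (σ x) + 1))
    fun z _ => mem_range.2 (Nat.lt_succ_of_le (hDub x z))]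
  have hlayer (i : ℕ) : ∑ z with G.dist x z = i,
      greenProfile (Fintype.card V) (kk (σ x)) (b (σ x)) (D (σ x)) (G.dist x z)
      = kk (σ x) i * greenProfile (Fintype.card V) (kk (σ x)) (b (σ x)) (D (σ x)) i := by
    rw [sum_congr rfl fun z hz => by rw [(mem_filter.1 hz).2], sum_const, hkk, nsmul_eq_mul]
  simp only [hlayer, (hA x).sum_mul_greenProfile, zero_mul]

variable [DecidableEq V] [DecidableRel G.Adj]

lemma greenMatrix_mul_lapMatrix (hG : HasIntersectionNumbers G σ c b) (hconn : G.Connected)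
    (hbip : ∀ x y : V, G.Adj x y → σ x ≠ σ y) (hDub : ∀ x y : V, G.dist x y ≤ D (σ x))
    (hA : ∀ x : V,
      IsIntersectionArray (Fintype.card V) (D (σ x)) (kk (σ x)) (b (σ x)) (c (σ x))) :
    greenMatrix G σ kk b D * G.lapMatrix ℝ = 1 - of fun _ _ => (Fintype.card V : ℝ)⁻¹ := by
  ext x y
  simp only [mul_lapMatrix_apply, greenMatrix, of_apply]
  rw [hG.sum_neighborFinset_comp_dist hconn hbip (greenProfile _ (kk (σ x)) (b (σ x)) (D (σ x))),
    hG.degree_eq hconn hbip x y, Nat.cast_add, (hA x).greenProfile_recurrence (hDub x y),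
    Matrix.sub_apply, one_apply, of_apply]
  simp only [hconn.dist_eq_zero_iff]

lemma greenMatrix_transpose (hG : HasIntersectionNumbers G σ c b) (hconn : G.Connected)
    (hbip : ∀ x y : V, G.Adj x y → σ x ≠ σ y) (hDub : ∀ x y : V, G.dist x y ≤ D (σ x))
    (hkk : ∀ (x : V) (i : ℕ), #{y | G.dist x y = i} = kk (σ x) i)
    (hA : ∀ x : V,
      IsIntersectionArray (Fintype.card V) (D (σ x)) (kk (σ x)) (b (σ x)) (c (σ x))) :
    (greenMatrix G σ kk b D)ᵀ = greenMatrix G σ kk b D :=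
  transpose_eq_of_mul_eq_one_sub (G.isSymm_lapMatrix (R := ℝ)) rfl
    (greenMatrix_mul_lapMatrix hG hconn hbip hDub hA) (greenMatrix_mul_const hDub hkk hA _)

lemma eq_greenMatrix_of_isGroupInverse (hG : HasIntersectionNumbers G σ c b)
    (hconn : G.Connected) (hbip : ∀ x y : V, G.Adj x y → σ x ≠ σ y)
    (hDub : ∀ x y : V, G.dist x y ≤ D (σ x))
    (hkk : ∀ (x : V) (i : ℕ), #{y | G.dist x y = i} = kk (σ x) i)
    (hA : ∀ x : V,
      IsIntersectionArray (Fintype.card V) (D (σ x)) (kk (σ x)) (b (σ x)) (c (σ x)))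
    {X : Matrix V V ℝ} (hX : IsGroupInverse (G.lapMatrix ℝ) X) : X = greenMatrix G σ kk b D :=
  hX.eq <| isGroupInverse_of_mul_eq_one_sub (G.isSymm_lapMatrix (R := ℝ)) rfl
    (G.const_mul_lapMatrix _)
    (greenMatrix_mul_lapMatrix hG hconn hbip hDub hA) (greenMatrix_mul_const hDub hkk hA _)

end GreenMatrix

theorem stmt15_general {V : Type} [Fintype V] [DecidableEq V]
    (G : SimpleGraph V) [DecidableRel G.Adj]
    (hconn : G.Connected)
    (σ : V → Fin 2)
    (hbip : ∀ x y : V, G.Adj x y → σ x ≠ σ y)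
    (k : Fin 2 → ℕ)
    (hdeg : ∀ x : V, G.degree x = k (σ x))
    (c b : Fin 2 → ℕ → ℕ)
    (hc : ∀ (x y : V) (i : ℕ), G.dist x y = i →
      (Finset.univ.filter (fun z => G.dist x z = i - 1 ∧ G.Adj y z)).card = c (σ x) i)
    (hb : ∀ (x y : V) (i : ℕ), G.dist x y = i →
      (Finset.univ.filter (fun z => G.dist x z = i + 1 ∧ G.Adj y z)).card = b (σ x) i)
    (D : Fin 2 → ℕ)
    (hDub : ∀ x y : V, G.dist x y ≤ D (σ x))
    (hDmax : ∀ ℓ : Fin 2, ∃ x y : V, σ x = ℓ ∧ G.dist x y = D ℓ)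
    (hD0 : 1 ≤ D 0)
    (kk : Fin 2 → ℕ → ℕ)
    (hkk : ∀ (x : V) (i : ℕ),
      (Finset.univ.filter (fun y => G.dist x y = i)).card = kk (σ x) i)
    (Lsharp : Matrix V V ℝ)
    (hLs1 : G.lapMatrix ℝ * Lsharp * G.lapMatrix ℝ = G.lapMatrix ℝ)
    (hLs2 : Lsharp * G.lapMatrix ℝ * Lsharp = Lsharp)
    (hLs3 : G.lapMatrix ℝ * Lsharp = Lsharp * G.lapMatrix ℝ) :
    (∀ x y : V, x ≠ y → Lsharp x y ≤ 0) ↔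
      ∑ j ∈ Finset.Icc 1 (D 0 - 1),
        (1 / ((kk 0 j : ℝ) * (b 0 j : ℝ))) *
          (∑ i ∈ Finset.Icc (j + 1) (D 0), (kk 0 i : ℝ)) ^ 2 ≤
        ((Fintype.card V : ℝ) - 1) / (k 0 : ℝ) := by
  have hG : HasIntersectionNumbers G σ c b := ⟨hc, hb⟩
  have hA := hG.isIntersectionArray hconn hDub hDmax hkk
  set M := greenMatrix G σ kk b D
  have hLs : Lsharp = M :=
    eq_greenMatrix_of_isGroupInverse hG hconn hbip hDub hkk hA ⟨hLs1, hLs2, hLs3⟩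
  have hMsymm : Mᵀ = M := greenMatrix_transpose hG hconn hbip hDub hkk hA
  obtain ⟨x₀, y₀, hx₀, hy₀⟩ := hDmax 0
  obtain ⟨z₀, hz₀⟩ := hconn.exists_dist_eq_of_le (hy₀ ▸ hD0 : 1 ≤ G.dist x₀ y₀)
  have hadj : G.Adj x₀ z₀ := dist_eq_one_iff_adj.1 hz₀
  have hz₀1 : σ z₀ = 1 := by have := hbip _ _ hadj; omega
  have hA₀ := hx₀ ▸ hA x₀
  set g := fun ℓ => greenProfile (Fintype.card V) (kk ℓ) (b ℓ) (D ℓ)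
  have hg₁ : ∀ ℓ, g ℓ 1 = g 0 1 := Fin.forall_fin_two.2 ⟨rfl, by
    simpa [M, greenMatrix, hx₀, hz₀1, dist_comm, hz₀] using
      congr_fun (congr_fun hMsymm x₀) z₀⟩
  have hk₀ : (k 0 : ℝ) = b 0 0 := by
    have := hG.degree_eq hconn hbip x₀ x₀
    rw [hdeg, hx₀, dist_self, hA₀.c_zero] at this
    simp [this]
  have hkey : g 0 1 ≤ 0 ↔ ∑ j ∈ Icc 1 (D 0 - 1), 1 / ((kk 0 j : ℝ) * b 0 j) *
      (∑ i ∈ Icc (j + 1) (D 0), (kk 0 i : ℝ)) ^ 2 ≤ (Fintype.card V - 1) / (k 0 : ℝ) := by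
    rw [show g 0 1 = _ from hA₀.greenProfile_one hD0, hk₀,
      div_le_iff₀ (pow_pos (Nat.cast_pos.2 hA₀.n_pos) 2), zero_mul, sub_nonpos]
    exact Iff.rfl
  rw [← hkey, hLs]
  refine ⟨fun h => ?_, fun h x y hxy => ?_⟩
  · simpa [M, greenMatrix, hx₀, hz₀] using h x₀ z₀ hadj.ne
  · calc M x y = g (σ x) (G.dist x y) := rfl
      _ ≤ g (σ x) 1 := greenProfile_antitone (hconn.pos_dist_of_ne hxy)
      _ = g 0 1 := hg₁ _
      _ ≤ 0 := h

theorem stmt15 {V : Type} [Fintype V] [DecidableEq V]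
    (G : SimpleGraph V) [DecidableRel G.Adj]
    (hconn : G.Connected) (hcard : 2 ≤ Fintype.card V)
    (σ : V → Fin 2)
    (hbip : ∀ x y : V, G.Adj x y → σ x ≠ σ y)
    (k : Fin 2 → ℕ)
    (hdeg : ∀ x : V, G.degree x = k (σ x))
    (c b : Fin 2 → ℕ → ℕ)
    (hc : ∀ (x y : V) (i : ℕ), G.dist x y = i →
      (Finset.univ.filter (fun z => G.dist x z = i - 1 ∧ G.Adj y z)).card = c (σ x) i)
    (hb : ∀ (x y : V) (i : ℕ), G.dist x y = i →
      (Finset.univ.filter (fun z => G.dist x z = i + 1 ∧ G.Adj y z)).card = b (σ x) i)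
    (D : Fin 2 → ℕ)
    (hDub : ∀ x y : V, G.dist x y ≤ D (σ x))
    (hDmax : ∀ ℓ : Fin 2, ∃ x y : V, σ x = ℓ ∧ G.dist x y = D ℓ)
    (hD0 : 1 ≤ D 0) (hD01 : D 0 ≤ D 1)
    (kk : Fin 2 → ℕ → ℕ)
    (hkk : ∀ (x : V) (i : ℕ),
      (Finset.univ.filter (fun y => G.dist x y = i)).card = kk (σ x) i)
    (Lsharp : Matrix V V ℝ)
    (hLs1 : G.lapMatrix ℝ * Lsharp * G.lapMatrix ℝ = G.lapMatrix ℝ)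
    (hLs2 : Lsharp * G.lapMatrix ℝ * Lsharp = Lsharp)
    (hLs3 : G.lapMatrix ℝ * Lsharp = Lsharp * G.lapMatrix ℝ) :
    (∀ x y : V, x ≠ y → Lsharp x y ≤ 0) ↔
      ∑ j ∈ Finset.Icc 1 (D 0 - 1),
        (1 / ((kk 0 j : ℝ) * (b 0 j : ℝ))) *
          (∑ i ∈ Finset.Icc (j + 1) (D 0), (kk 0 i : ℝ)) ^ 2 ≤
        ((Fintype.card V : ℝ) - 1) / (k 0 : ℝ) :=
  stmt15_general G hconn σ hbip k hdeg c b hc hb D hDub hDmax hD0 kk hkk Lsharp hLs1 hLs2 hLs3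
end

section
/- Let Γ be a distance-biregular graph with the M-property and D₀ ≥ 2. Then n < 2k₁ + k₀. -/
/-!
Take `y ∈ V₁`, so `deg y = k₁` and every neighbour of `y` has degree `k₀`, and write `n = |V|`.
The column `h` of `L^#` at `y` satisfies `L h = e_y - 𝟙/n`, hence `h ⬝ L h = L^#(y,y)`; reading
`(L L^#)(y,y) = 1 - 1/n` with the M-property gives `k₁ L^#(y,y) ≤ 1 - 1/n`. The Cauchy–Schwarz
inequality for the positive semidefinite form of `L`, applied to `h` and a vector supported on `y`
and its neighbourhood, turns this into `(n - 1 - k₁)² ≤ (k₀ - 1)(n - 1)`, which is incompatible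
with `n ≥ 2k₁ + k₀`.
-/

open Finset SimpleGraph Matrix

structure Matrix.IsGroupInverse {n R : Type*} [Fintype n] [Semiring R] (A X : Matrix n n R) :
    Prop where
  mul_mul_self : A * X * A = A
  self_mul_mul : X * A * X = X
  mul_comm : A * X = X * A

namespace SimpleGraph

variable {V : Type*} [DecidableEq V] {G : SimpleGraph V} [DecidableRel G.Adj]

section StarVector

variable {y : V} {a b : ℝ}

variable (G) in
def starVector (y : V) (a b : ℝ) : V → ℝ := Pi.single y a + fun x ↦ if G.Adj y x then b else 0

theorem starVector_self : G.starVector y a b y = a := by simp [starVector]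

theorem starVector_of_adj {x : V} (h : G.Adj y x) : G.starVector y a b x = b := by
  simp [starVector, h, h.ne']

theorem starVector_of_ne_of_not_adj {x : V} (hne : x ≠ y) (hadj : ¬G.Adj y x) :
    G.starVector y a b x = 0 := by
  simp [starVector, hne, hadj]

end StarVector

variable [Fintype V]

theorem one_vecMul_lapMatrix {R : Type*} [CommRing R] : (1 : V → R) ᵥ* G.lapMatrix R = 0 := by
  rw [← mulVec_transpose, (isSymm_lapMatrix R G).eq]
  exact G.lapMatrix_mulVec_const_eq_zero

theorem sum_lapMatrix_mulVec {R : Type*} [CommRing R] (v : V → R) :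
    ∑ i, (G.lapMatrix R *ᵥ v) i = 0 := by
  rw [← one_dotProduct, dotProduct_mulVec, one_vecMul_lapMatrix, zero_dotProduct]

theorem dotProduct_lapMatrix_mulVec_sq_le (x y : V → ℝ) :
    (x ⬝ᵥ G.lapMatrix ℝ *ᵥ y) ^ 2 ≤ (x ⬝ᵥ G.lapMatrix ℝ *ᵥ x) * (y ⬝ᵥ G.lapMatrix ℝ *ᵥ y) := by
  simpa only [toBilin'_apply'] using
    (toBilin' (G.lapMatrix ℝ)).apply_sq_le_of_symm
      (fun v ↦ by
        simpa [toBilin'_apply'] using (posSemidef_lapMatrix ℝ G).dotProduct_mulVec_nonneg v)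
      (LinearMap.BilinForm.isSymm_iff.1 (isSymm_toBilin'_iff_isSymm.2 (isSymm_lapMatrix ℝ G)))
      x y

theorem Connected.eq_zero_of_lapMatrix_mulVec_eq_zero (hG : G.Connected) {v : V → ℝ}
    (hv : G.lapMatrix ℝ *ᵥ v = 0) (hsum : ∑ i, v i = 0) : v = 0 := by
  have hconst := (lapMatrix_mulVec_eq_zero_iff_forall_reachable G).1 hv
  ext i
  have : Nonempty V := ⟨i⟩
  have hcard : (Fintype.card V : ℝ) * v i = 0 := by
    rw [← hsum, Finset.sum_congr rfl fun j _ ↦ hconst j i (hG.preconnected j i)]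
    simp
  exact (mul_eq_zero.1 hcard).resolve_left (Nat.cast_ne_zero.2 Fintype.card_ne_zero)

section GroupInverse

variable {X : Matrix V V ℝ}

theorem one_vecMul_eq_zero_of_isGroupInverse (hX : (G.lapMatrix ℝ).IsGroupInverse X) :
    (1 : V → ℝ) ᵥ* X = 0 := by
  rw [← hX.self_mul_mul, ← hX.mul_comm, ← vecMul_vecMul, ← vecMul_vecMul, one_vecMul_lapMatrix,
    zero_vecMul, zero_vecMul]

theorem Connected.lapMatrix_mulVec_col (hG : G.Connected)
    (hX : (G.lapMatrix ℝ).IsGroupInverse X) (y : V) :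
    G.lapMatrix ℝ *ᵥ X.col y = Pi.single y 1 - (Fintype.card V : ℝ)⁻¹ • 1 := by
  rw [← sub_eq_zero]
  apply hG.eq_zero_of_lapMatrix_mulVec_eq_zero
  · have hLLX : G.lapMatrix ℝ * G.lapMatrix ℝ * X = G.lapMatrix ℝ * X * G.lapMatrix ℝ := by
      rw [Matrix.mul_assoc, hX.mul_comm, ← Matrix.mul_assoc, hX.mul_comm]
    have hL1 : G.lapMatrix ℝ *ᵥ (1 : V → ℝ) = 0 := G.lapMatrix_mulVec_const_eq_zero
    rw [mulVec_sub, ← mulVec_single_one, mulVec_mulVec, mulVec_mulVec, hLLX, hX.mul_mul_self,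
      mulVec_sub, mulVec_smul, hL1, smul_zero, sub_zero, sub_self]
  · have : Nonempty V := ⟨y⟩
    have : (Fintype.card V : ℝ) ≠ 0 := Nat.cast_ne_zero.2 Fintype.card_ne_zero
    simp [Finset.sum_sub_distrib, sum_lapMatrix_mulVec, this]

theorem Connected.col_dotProduct_lapMatrix_mulVec_col (hG : G.Connected)
    (hX : (G.lapMatrix ℝ).IsGroupInverse X) (y : V) :
    X.col y ⬝ᵥ G.lapMatrix ℝ *ᵥ X.col y = X y y := by
  have hsum : ∑ x, X.col y x = 0 := by
    simpa [vecMul, dotProduct] using congrFun (one_vecMul_eq_zero_of_isGroupInverse hX) y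
  rw [hG.lapMatrix_mulVec_col hX, dotProduct_sub, dotProduct_smul, dotProduct_single,
    dotProduct_one, hsum]
  simp [col_apply]

theorem Connected.degree_mul_apply_self_le (hG : G.Connected)
    (hX : (G.lapMatrix ℝ).IsGroupInverse X) {y : V} (hy : ∀ x, x ≠ y → X x y ≤ 0) :
    G.degree y * X y y ≤ 1 - (Fintype.card V : ℝ)⁻¹ := by
  have h := congrFun (hG.lapMatrix_mulVec_col hX y) y
  rw [lapMatrix_mulVec_apply] at h
  have hnbr : ∑ x ∈ G.neighborFinset y, X.col y x ≤ 0 :=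
    sum_nonpos fun x hx ↦ hy x (G.ne_of_adj ((mem_neighborFinset G y x).1 hx)).symm
  simp only [col_apply, Pi.sub_apply, Pi.single_eq_same, Pi.smul_apply, Pi.one_apply,
    smul_eq_mul, mul_one] at h hnbr
  linarith

end GroupInverse

section StarVector

variable {y : V} {a b : ℝ}

theorem lapMatrix_mulVec_starVector_self :
    (G.lapMatrix ℝ *ᵥ G.starVector y a b) y = G.degree y * (a - b) := by
  rw [lapMatrix_mulVec_apply, starVector_self,
    Finset.sum_congr rfl fun x hx ↦ starVector_of_adj ((mem_neighborFinset G y x).1 hx)]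
  simp [mul_sub]

theorem lapMatrix_mulVec_starVector_of_adj (hG : G.CliqueFree 3) {x : V} (hx : G.Adj y x) :
    (G.lapMatrix ℝ *ᵥ G.starVector y a b) x = G.degree x * b - a := by
  have hval : ∀ z ∈ G.neighborFinset x, G.starVector y a b z = if z = y then a else 0 := by
    intro z hz
    split_ifs with hzy
    · rw [hzy, starVector_self]
    · refine starVector_of_ne_of_not_adj hzy fun hyz ↦ hG {y, x, z} ?_
      exact is3Clique_triple_iff.2 ⟨hx, hyz, (mem_neighborFinset G x z).1 hz⟩
  rw [lapMatrix_mulVec_apply, starVector_of_adj hx, Finset.sum_congr rfl hval,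
    Finset.sum_ite_eq', if_pos ((mem_neighborFinset G x y).2 hx.symm)]

theorem starVector_dotProduct (v : V → ℝ) :
    G.starVector y a b ⬝ᵥ v = a * v y + b * ∑ x ∈ G.neighborFinset y, v x := by
  rw [starVector, add_dotProduct, single_dotProduct, neighborFinset_eq_filter, Finset.sum_filter,
    Finset.mul_sum]
  simp [dotProduct, mul_ite]

theorem starVector_dotProduct_single_sub_smul_one (r : ℝ) :
    G.starVector y a b ⬝ᵥ (Pi.single y 1 - r • 1) = a - r * (a + G.degree y * b) := by
  rw [dotProduct_sub, dotProduct_smul, dotProduct_single, starVector_self, starVector_dotProduct]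
  simp [card_neighborFinset_eq_degree, mul_comm]

theorem starVector_dotProduct_lapMatrix_mulVec (hG : G.CliqueFree 3) {e : ℕ}
    (he : ∀ x, G.Adj y x → G.degree x = e) :
    G.starVector y a b ⬝ᵥ G.lapMatrix ℝ *ᵥ G.starVector y a b
      = G.degree y * ((a - b) ^ 2 + (e - 1) * b ^ 2) := by
  have hnbr : ∀ x ∈ G.neighborFinset y, (G.lapMatrix ℝ *ᵥ G.starVector y a b) x = e * b - a :=
    fun x hx ↦ by
      have hx := (mem_neighborFinset G y x).1 hx
      rw [lapMatrix_mulVec_starVector_of_adj hG hx, he x hx]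
  rw [starVector_dotProduct, lapMatrix_mulVec_starVector_self, Finset.sum_congr rfl hnbr,
    Finset.sum_const, card_neighborFinset_eq_degree, nsmul_eq_mul]
  ring

end StarVector

theorem Connected.sq_card_sub_one_sub_degree_le (hG : G.Connected) (hG3 : G.CliqueFree 3)
    {X : Matrix V V ℝ} (hX : (G.lapMatrix ℝ).IsGroupInverse X) {y : V}
    (hy : ∀ x, x ≠ y → X x y ≤ 0) {e : ℕ} (he : ∀ x, G.Adj y x → G.degree x = e) (he1 : 1 ≤ e) :
    ((Fintype.card V : ℝ) - 1 - G.degree y) ^ 2 ≤ (e - 1) * (Fintype.card V - 1) := by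
  have : Nonempty V := ⟨y⟩
  set n : ℝ := (Fintype.card V : ℝ)
  set d : ℝ := (G.degree y : ℝ)
  have hn : 1 ≤ n := Nat.one_le_cast.2 Fintype.card_pos
  have he1 : (1 : ℝ) ≤ e := Nat.one_le_cast.2 he1
  set c := n - 1 - d
  set T := (n - 1) ^ 2 * (e - 1) + c ^ 2
  -- With `a - b = (n - 1)(e - 1)` and `b = c`, both sides of Cauchy–Schwarz are multiples of `T`.
  have hcs := dotProduct_lapMatrix_mulVec_sq_le (G := G)
    (G.starVector y ((n - 1) * (e - 1) + c) c) (X.col y)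
  rw [hG.col_dotProduct_lapMatrix_mulVec_col hX, starVector_dotProduct_lapMatrix_mulVec hG3 he,
    hG.lapMatrix_mulVec_col hX, starVector_dotProduct_single_sub_smul_one] at hcs
  have hw : (n - 1) * (e - 1) + c - n⁻¹ * ((n - 1) * (e - 1) + c + d * c) = T / n := by
    field_simp
    ring
  rw [hw] at hcs
  have hT0 : 0 ≤ T := by positivity
  have hT : T / n * (T / n) ≤ T / n * ((e - 1) * (n - 1)) := by
    calc T / n * (T / n) = (T / n) ^ 2 := (sq _).symm
      _ ≤ d * (((n - 1) * (e - 1) + c - c) ^ 2 + (e - 1) * c ^ 2) * X y y := hcs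
      _ = (e - 1) * T * (d * X y y) := by ring
      _ ≤ (e - 1) * T * (1 - n⁻¹) := by
        gcongr
        exact hG.degree_mul_apply_self_le hX hy
      _ = T / n * ((e - 1) * (n - 1)) := by field_simp
  rcases hT0.eq_or_lt with hT0 | hT0
  · nlinarith [mul_nonneg (sq_nonneg (n - 1)) (sub_nonneg.2 he1)]
  · have hTle := le_of_mul_le_mul_left hT (by positivity)
    rw [div_le_iff₀ (by positivity)] at hTle
    nlinarith

end SimpleGraph

theorem stmt16_general {V : Type} [Fintype V] [DecidableEq V]
    (G : SimpleGraph V) [DecidableRel G.Adj]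
    (hconn : G.Connected) (hcard : 2 ≤ Fintype.card V)
    (σ : V → Fin 2)
    (hbip : ∀ x y : V, G.Adj x y → σ x ≠ σ y)
    (k : Fin 2 → ℕ)
    (hdeg : ∀ x : V, G.degree x = k (σ x))
    (Lsharp : Matrix V V ℝ)
    (hLs1 : G.lapMatrix ℝ * Lsharp * G.lapMatrix ℝ = G.lapMatrix ℝ)
    (hLs2 : Lsharp * G.lapMatrix ℝ * Lsharp = Lsharp)
    (hLs3 : G.lapMatrix ℝ * Lsharp = Lsharp * G.lapMatrix ℝ)
    (hM : ∀ x y : V, x ≠ y → Lsharp x y ≤ 0) :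
    Fintype.card V < 2 * k 1 + k 0 := by
  have : Nontrivial V := Fintype.one_lt_card_iff_nontrivial.1 hcard
  have hdeg_pos := hconn.preconnected.degree_pos_of_nontrivial
  obtain ⟨v⟩ : Nonempty V := inferInstance
  obtain ⟨u, hvu⟩ := (G.degree_pos_iff_exists_adj v).1 (hdeg_pos v)
  obtain ⟨y, x, hy, hyx⟩ : ∃ y x, σ y = 1 ∧ G.Adj y x := by
    by_cases hv : σ v = 1
    · exact ⟨v, u, hv, hvu⟩
    · exact ⟨u, v, by have := hbip v u hvu; omega, hvu.symm⟩
  have hnbr : ∀ z, G.Adj y z → G.degree z = k 0 := fun z hz ↦ by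
    have := hbip y z hz
    rw [hdeg z, show σ z = 0 by omega]
  have hG3 : G.CliqueFree 3 := (Coloring.mk σ fun h ↦ hbip _ _ h).colorable.cliqueFree (by simp)
  have key := hconn.sq_card_sub_one_sub_degree_le hG3 ⟨hLs1, hLs2, hLs3⟩ (fun z hz ↦ hM z y hz)
    hnbr (hnbr x hyx ▸ hdeg_pos x)
  have hk1 : (1 : ℝ) ≤ k 1 := by rw [← hy, ← hdeg y]; exact_mod_cast hdeg_pos y
  rw [hdeg y, hy] at key
  by_contra! hle
  have hle : (2 * k 1 + k 0 : ℝ) ≤ Fintype.card V := by exact_mod_cast hle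
  nlinarith

theorem stmt16 {V : Type} [Fintype V] [DecidableEq V]
    (G : SimpleGraph V) [DecidableRel G.Adj]
    (hconn : G.Connected) (hcard : 2 ≤ Fintype.card V)
    (σ : V → Fin 2)
    (hbip : ∀ x y : V, G.Adj x y → σ x ≠ σ y)
    (k : Fin 2 → ℕ)
    (hdeg : ∀ x : V, G.degree x = k (σ x))
    (c b : Fin 2 → ℕ → ℕ)
    (hc : ∀ (x y : V) (i : ℕ), G.dist x y = i →
      (Finset.univ.filter (fun z => G.dist x z = i - 1 ∧ G.Adj y z)).card = c (σ x) i)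
    (hb : ∀ (x y : V) (i : ℕ), G.dist x y = i →
      (Finset.univ.filter (fun z => G.dist x z = i + 1 ∧ G.Adj y z)).card = b (σ x) i)
    (D : Fin 2 → ℕ)
    (hDub : ∀ x y : V, G.dist x y ≤ D (σ x))
    (hDmax : ∀ ℓ : Fin 2, ∃ x y : V, σ x = ℓ ∧ G.dist x y = D ℓ)
    (hD0 : 1 ≤ D 0) (hD01 : D 0 ≤ D 1)
    (Lsharp : Matrix V V ℝ)
    (hLs1 : G.lapMatrix ℝ * Lsharp * G.lapMatrix ℝ = G.lapMatrix ℝ)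
    (hLs2 : Lsharp * G.lapMatrix ℝ * Lsharp = Lsharp)
    (hLs3 : G.lapMatrix ℝ * Lsharp = Lsharp * G.lapMatrix ℝ)
    (hM : ∀ x y : V, x ≠ y → Lsharp x y ≤ 0)
    (hD02 : 2 ≤ D 0) :
    Fintype.card V < 2 * k 1 + k 0 :=
  stmt16_general G hconn hcard σ hbip k hdeg Lsharp hLs1 hLs2 hLs3 hM
end
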